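/- arXiv:2111.04772 — 4 statements merged into one kernel-verified Lean document; each statement's English description precedes it below -/
import Mathlib

section
/- Let n ≥ 2, let μ be a probability vector on ℕ₀ with μ₀ ∈ (0,1), and in the Boolean percolation model on the infinite directed n-ary tree 𝒟_n define r_m = P[∃ y ∈ V_μ^c(𝒟_n) with d(∅, y) = m] for m ∈ ℕ. Then for all m ≥ 1 the recurrence r_{m+1} = (1 − (1 − r_m)ⁿ) · F(m+1) holds, where F(k) = ∑_{l=0}^{k} μ_l. -/
open MeasureTheory ProbabilityTheory
open scoped ENNReal

lemma key_formula {Ω : Type*} [MeasurableSpace Ω] (P : Measure Ω) {ι : Type*}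
    (Z : ι → Ω → ℕ) (hmeas : ∀ i, Measurable (Z i))
    (hindep : iIndepFun Z P)
    {τ : Type*} [Fintype τ] (e : τ → ι) (he : Function.Injective e)
    (Q : (τ → ℕ) → Prop) [DecidablePred Q] :
    P {ω | Q (fun t => Z (e t) ω)} =
      ∑' g : τ → ℕ, (if Q g then ∏ t, P {ω | Z (e t) ω = g t} else 0) := by
  classical
  set s : (τ → ℕ) → Set Ω :=
    fun g => if Q g then ⋂ t, (Z (e t)) ⁻¹' {g t} else (∅ : Set Ω) with hs
  have hset : {ω | Q (fun t => Z (e t) ω)} = ⋃ g : τ → ℕ, s g := by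
    ext ω
    simp only [Set.mem_setOf_eq, Set.mem_iUnion, hs]
    constructor
    · intro h
      refine ⟨fun t => Z (e t) ω, ?_⟩
      rw [if_pos h]
      simp
    · rintro ⟨g, hg⟩
      split_ifs at hg with hQ
      · simp only [Set.mem_iInter, Set.mem_preimage, Set.mem_singleton_iff] at hg
        have hfg : (fun t => Z (e t) ω) = g := funext hg
        rw [hfg]; exact hQ
      · exact absurd hg (Set.notMem_empty ω)
  have hprod : ∀ g : τ → ℕ,
      P (⋂ t, (Z (e t)) ⁻¹' {g t}) = ∏ t, P {ω | Z (e t) ω = g t} := by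
    intro g
    have hmul := hindep.measure_inter_preimage_eq_mul (Finset.univ.image e)
      (sets := fun i => {k | ∀ t, e t = i → k = g t}) (fun i _ => .of_discrete)
    have hInt : (⋂ i ∈ Finset.univ.image e, Z i ⁻¹' {k | ∀ t, e t = i → k = g t})
        = ⋂ t, (Z (e t)) ⁻¹' {g t} := by
      ext ω
      simp only [Set.mem_iInter, Set.mem_preimage, Set.mem_setOf_eq, Finset.mem_image,
        Finset.mem_univ, true_and, Set.mem_singleton_iff]
      constructor
      · intro h t
        exact h (e t) ⟨t, rfl⟩ t rfl
      · rintro h i ⟨t, rfl⟩ t' ht'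
        obtain rfl := he ht'
        exact h _
    rw [hInt] at hmul
    rw [hmul, Finset.prod_image (fun x _ y _ h => he h)]
    refine Finset.prod_congr rfl fun t _ => ?_
    show P (Z (e t) ⁻¹' {k | ∀ t', e t' = e t → k = g t'}) = P {ω | Z (e t) ω = g t}
    have hsets : ({k | ∀ t', e t' = e t → k = g t'} : Set ℕ) = {g t} := by
      ext k
      simp only [Set.mem_setOf_eq, Set.mem_singleton_iff]
      constructor
      · intro h; exact h t rfl
      · intro h t' ht'; obtain rfl := he ht'; exact h
    rw [hsets]
    rfl
  have hdisj : Pairwise (Function.onFun Disjoint s) := by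
    intro g g' hne
    refine Set.disjoint_left.mpr fun ω hω hω' => hne ?_
    simp only [hs] at hω hω'
    split_ifs at hω hω' with h1 h2 h2
    · simp only [Set.mem_iInter, Set.mem_preimage, Set.mem_singleton_iff] at hω hω'
      funext t
      rw [← hω t, ← hω' t]
    all_goals first
      | exact absurd hω' (Set.notMem_empty ω)
      | exact absurd hω (Set.notMem_empty ω)
  have hmeas' : ∀ g, MeasurableSet (s g) := by
    intro g
    simp only [hs]
    split_ifs with hQ
    · exact MeasurableSet.iInter fun t => (hmeas (e t)) .of_discrete
    · exact MeasurableSet.empty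
  rw [hset, measure_iUnion hdisj hmeas']
  refine tsum_congr fun g => ?_
  simp only [hs]
  split_ifs with hQ
  · exact hprod g
  · simp


/-- Index type for the lists of length at most `m` over `Fin n`. -/
abbrev PercIdx (n m : ℕ) : Type := Σ k : Fin (m + 1), Fin (k : ℕ) → Fin n

/-- Embedding of the index type into lists. -/
def percEmb (n m : ℕ) : PercIdx n m → List (Fin n) := fun p => List.ofFn p.2

lemma percEmb_inj (n m : ℕ) : Function.Injective (percEmb n m) := by
  rintro ⟨k, f⟩ ⟨k', f'⟩ h
  simp only [percEmb] at h
  have hk : (k : ℕ) = (k' : ℕ) := by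
    have := congrArg List.length h
    simpa using this
  obtain rfl : k = k' := Fin.ext hk
  obtain rfl := List.ofFn_injective h
  rfl

/-- The "uncovered vertex at level m exists" predicate on configurations. -/
def percQ (n m : ℕ) (g : PercIdx n m → ℕ) : Prop :=
  ∃ y : List (Fin n), ∃ hy : y.length = m,
    ∀ x : List (Fin n), ∀ hp : x <+: y,
      g ⟨⟨x.length, Nat.lt_succ_of_le (hy ▸ hp.length_le)⟩, fun i => x.get ⟨i.1, i.2⟩⟩
        ≤ m - x.length

lemma percEmb_enc (n m : ℕ) (x : List (Fin n)) (h : x.length < m + 1) :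
    percEmb n m ⟨⟨x.length, h⟩, fun i => x.get ⟨i.1, i.2⟩⟩ = x := by
  simp only [percEmb]
  exact List.ofFn_get x

lemma perc_event_iff (n m : ℕ) (w : List (Fin n) → ℕ) :
    (∃ y : List (Fin n), y.length = m ∧
        ¬∃ x : List (Fin n), x <+: y ∧ y.length - x.length < w x)
      ↔ percQ n m (fun t => w (percEmb n m t)) := by
  constructor
  · rintro ⟨y, hy, hno⟩
    push_neg at hno
    refine ⟨y, hy, fun x hp => ?_⟩
    simp only [percEmb_enc]
    have := hno x hp
    omega
  · rintro ⟨y, hy, hcond⟩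
    refine ⟨y, hy, ?_⟩
    rintro ⟨x, hp, hlt⟩
    have h2 := hcond x hp
    simp only [percEmb_enc] at h2
    omega

lemma perc_event_split (n m : ℕ) (w : List (Fin n) → ℕ) :
    (∃ y : List (Fin n), y.length = m + 1 ∧
        ¬∃ x : List (Fin n), x <+: y ∧ y.length - x.length < w x)
      ↔ (w [] ≤ m + 1 ∧ ∃ j : Fin n, ∃ y' : List (Fin n), y'.length = m ∧
          ¬∃ x : List (Fin n), x <+: y' ∧ y'.length - x.length < w (j :: x)) := by
  constructor
  · rintro ⟨y, hy, hno⟩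
    push_neg at hno
    obtain ⟨a, y', rfl⟩ : ∃ a y'', y = a :: y'' := by
      cases y with
      | nil => simp at hy
      | cons a t => exact ⟨a, t, rfl⟩
    have hy' : y'.length = m := by simpa using hy
    constructor
    · have := hno [] List.nil_prefix
      simpa [hy'] using this
    · refine ⟨a, y', hy', ?_⟩
      rintro ⟨x, hp, hlt⟩
      have := hno (a :: x) (List.cons_prefix_cons.mpr ⟨rfl, hp⟩)
      simp only [List.length_cons] at this
      omega
  · rintro ⟨h0, j, y', hy', hno⟩
    push_neg at hno
    refine ⟨j :: y', by simp [hy'], ?_⟩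
    rintro ⟨x, hp, hlt⟩
    cases x with
    | nil => simp [hy'] at hlt; omega
    | cons b x' =>
      obtain ⟨rfl, hp'⟩ := List.cons_prefix_cons.mp hp
      have := hno x' hp'
      simp only [List.length_cons] at hlt
      omega


/-- For Boolean percolation on the infinite directed `n`-ary
tree `𝒟ₙ` (`n ≥ 2`), with `r m` the probability that some vertex at distance `m`
from the root is uncovered, the recurrence
`r (m+1) = (1 - (1 - r m)ⁿ) · F (m+1)` holds for all `m ≥ 1`,
where `F k = ∑_{l=0}^{k} μ l`. -/
theorem boolean_percolation_tree_recurrence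
    (n : ℕ) (hn : 2 ≤ n)
    (μ : ℕ → ℝ) (hμnonneg : ∀ m, 0 ≤ μ m) (hμsum : ∑' m, μ m = 1)
    (hμ0pos : 0 < μ 0) (hμ0lt : μ 0 < 1)
    (Ω : Type*) [MeasurableSpace Ω] (P : Measure Ω) [IsProbabilityMeasure P]
    (Y : List (Fin n) → Ω → ℕ) (hYmeas : ∀ x, Measurable (Y x))
    (hYindep : iIndepFun Y P)
    (hYdist : ∀ x k, P {ω | Y x ω = k} = ENNReal.ofReal (μ k))
    (r : ℕ → ℝ≥0∞)
    (hr : ∀ m : ℕ, r m = P {ω | ∃ y : List (Fin n), y.length = m ∧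
      ¬ ∃ x : List (Fin n), x <+: y ∧ y.length - x.length < Y x ω}) :
    ∀ m : ℕ, 1 ≤ m →
      r (m + 1) = (1 - (1 - r m) ^ n) *
        ENNReal.ofReal (∑ l ∈ Finset.range (m + 2), μ l) := by
  intro m hm
  classical
  -- the root event and the subtree events
  set C : Set Ω := {ω | Y [] ω ≤ m + 1} with hC
  set B : Fin n → Set Ω := fun j =>
    ⋃ y : List (Fin n), ⋃ _ : y.length = m, ⋂ x : List (Fin n), ⋂ _ : x <+: y,
      {ω | Y (j :: x) ω ≤ m - x.length} with hB
  have hBQ : ∀ j, B j = {ω | percQ n m (fun t => Y (j :: percEmb n m t) ω)} := by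
    intro j; ext ω
    simp only [hB, Set.mem_iUnion, Set.mem_iInter, Set.mem_setOf_eq, percQ]
    constructor
    · rintro ⟨y, hy, h⟩
      refine ⟨y, hy, fun x hp => ?_⟩
      simp only [percEmb_enc]
      exact h x hp
    · rintro ⟨y, hy, h⟩
      refine ⟨y, hy, fun x hp => ?_⟩
      have h2 := h x hp
      simpa only [percEmb_enc] using h2
  -- the common value of subtree event probabilities
  set R : ℝ≥0∞ := ∑' g : PercIdx n m → ℕ,
      (if percQ n m g then ∏ t, ENNReal.ofReal (μ (g t)) else 0) with hR
  have keyP : ∀ (e : PercIdx n m → List (Fin n)), Function.Injective e →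
      P {ω | percQ n m (fun t => Y (e t) ω)} = R := by
    intro e he
    rw [key_formula P Y hYmeas hYindep e he (percQ n m), hR]
    refine tsum_congr fun g => ?_
    split_ifs with h
    · exact Finset.prod_congr rfl fun t _ => hYdist _ _
    · rfl
  have hrm : r m = R := by
    rw [hr m]
    have hset : {ω | ∃ y : List (Fin n), y.length = m ∧
        ¬∃ x : List (Fin n), x <+: y ∧ y.length - x.length < Y x ω}
        = {ω | percQ n m (fun t => Y (percEmb n m t) ω)} := by
      ext ω
      exact perc_event_iff n m (fun x => Y x ω)
    rw [hset, keyP _ (percEmb_inj n m)]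
  have hBP : ∀ j, P (B j) = R := by
    intro j
    rw [hBQ j]
    exact keyP (fun t => j :: percEmb n m t)
      (fun t t' h => percEmb_inj n m (by injection h))
  -- measurability
  have hBm : ∀ (M : MeasurableSpace Ω) (j : Fin n),
      (∀ (x : List (Fin n)) (s : Set ℕ), MeasurableSet[M] (Y (j :: x) ⁻¹' s)) →
      MeasurableSet[M] (B j) := by
    intro M j hgen
    refine MeasurableSet.iUnion fun y => MeasurableSet.iUnion fun _ =>
      MeasurableSet.iInter fun x => MeasurableSet.iInter fun _ => ?_
    exact hgen x {k | k ≤ m - x.length}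
  have hBm0 : ∀ j, MeasurableSet (B j) :=
    fun j => hBm _ j (fun x s => (hYmeas _) .of_discrete)
  have hCm : MeasurableSet C := (hYmeas []) (.of_discrete (s := {k | k ≤ m + 1}))
  -- sup σ-algebras and independence
  set mY : List (Fin n) → MeasurableSpace Ω :=
    fun x => MeasurableSpace.comap (Y x) inferInstance with hmY
  have hYindep' : iIndep mY P := hYindep
  have hle : ∀ x, mY x ≤ ‹MeasurableSpace Ω› := fun x => (hYmeas x).comap_le
  have hgen : ∀ (S : Set (List (Fin n))) (x : List (Fin n)), x ∈ S → ∀ s : Set ℕ,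
      MeasurableSet[⨆ x ∈ S, mY x] (Y x ⁻¹' s) := by
    intro S x hx s
    have h1 : MeasurableSet[mY x] (Y x ⁻¹' s) := ⟨s, .of_discrete, rfl⟩
    exact (le_iSup₂ (f := fun (x : List (Fin n)) (_ : x ∈ S) => mY x) x hx) _ h1
  -- the product over groups of subtrees
  have hgroup : ∀ T : Finset (Fin n),
      P (C ∩ ⋂ j ∈ T, (B j)ᶜ) = P C * ∏ j ∈ T, P ((B j)ᶜ) := by
    intro T
    induction T using Finset.induction_on with
    | empty => simp
    | @insert a T ha ih =>
      have hrw : C ∩ ⋂ j ∈ insert a T, (B j)ᶜ = (C ∩ ⋂ j ∈ T, (B j)ᶜ) ∩ (B a)ᶜ := by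
        rw [Finset.set_biInter_insert, Set.inter_comm ((B a)ᶜ), ← Set.inter_assoc]
      set S1 : Set (List (Fin n)) :=
        insert [] {x | ∃ j ∈ T, ∃ x', x = j :: x'} with hS1
      set S2 : Set (List (Fin n)) := {x | ∃ x', x = a :: x'} with hS2
      have hdS : Disjoint S1 S2 := by
        rw [Set.disjoint_left]
        rintro x hx ⟨x'', rfl⟩
        simp only [hS1, Set.mem_insert_iff, Set.mem_setOf_eq] at hx
        rcases hx with h | ⟨j, hj, x', hx'⟩
        · exact absurd h (by simp)
        · have h1 : a = j := (List.cons_eq_cons.mp hx').1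
          exact ha (by rw [h1]; exact hj)
      have hind := indep_iSup_of_disjoint (m := mY) (fun x => hle x) hYindep' hdS
      have hBT : ∀ j ∈ T, MeasurableSet[⨆ x ∈ S1, mY x] (B j) := by
        intro j hj
        refine hBm _ j fun x s => ?_
        refine hgen S1 (j :: x) ?_ s
        exact Set.mem_insert_iff.mpr (Or.inr ⟨j, hj, x, rfl⟩)
      have hA1 : MeasurableSet[⨆ x ∈ S1, mY x] (C ∩ ⋂ j ∈ T, (B j)ᶜ) := by
        refine MeasurableSet.inter ?_
          (Finset.measurableSet_biInter _ fun j hj => (hBT j hj).compl)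
        have hmem0 : ([] : List (Fin n)) ∈ S1 := by rw [hS1]; exact Set.mem_insert _ _
        exact hgen S1 ([] : List (Fin n)) hmem0 {k | k ≤ m + 1}
      have hA2 : MeasurableSet[⨆ x ∈ S2, mY x] ((B a)ᶜ) :=
        (hBm _ a fun x s => hgen S2 (a :: x) ⟨x, rfl⟩ s).compl
      calc P (C ∩ ⋂ j ∈ insert a T, (B j)ᶜ)
          = P ((C ∩ ⋂ j ∈ T, (B j)ᶜ) ∩ (B a)ᶜ) := by rw [hrw]
        _ = P (C ∩ ⋂ j ∈ T, (B j)ᶜ) * P ((B a)ᶜ) :=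
            (Indep_iff _ _ P).1 hind _ _ hA1 hA2
        _ = P C * ∏ j ∈ insert a T, P ((B j)ᶜ) := by
            rw [ih, Finset.prod_insert ha]; ring
  -- value of P C
  have hPC : P C = ENNReal.ofReal (∑ l ∈ Finset.range (m + 2), μ l) := by
    have h1 : C = ⋃ k ∈ Finset.range (m + 2), {ω | Y [] ω = k} := by
      ext ω
      simp only [hC, Set.mem_setOf_eq, Set.mem_iUnion, Finset.mem_range, exists_prop]
      constructor
      · intro h; exact ⟨Y [] ω, by omega, rfl⟩
      · rintro ⟨k, hk, h⟩; omega
    rw [h1, measure_biUnion_finset ?_ ?_]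
    · rw [ENNReal.ofReal_sum_of_nonneg (fun i _ => hμnonneg i)]
      exact Finset.sum_congr rfl fun k _ => hYdist [] k
    · intro i hi j hj hij
      refine Set.disjoint_left.mpr fun ω h1 h2 => hij ?_
      simp only [Set.mem_setOf_eq] at h1 h2
      omega
    · intro k hk
      exact (hYmeas []) (.of_discrete (s := {k}))
  -- split the event for r (m+1)
  have hA : r (m + 1) = P (C ∩ ⋃ j, B j) := by
    rw [hr (m + 1)]
    congr 1
    ext ω
    rw [Set.mem_setOf_eq, perc_event_split n m (fun x => Y x ω)]
    simp only [Set.mem_inter_iff, Set.mem_iUnion, hC, Set.mem_setOf_eq]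
    constructor
    · rintro ⟨h0, j, hj⟩
      refine ⟨h0, j, ?_⟩
      rw [hBQ j]
      exact (perc_event_iff n m (fun x => Y (j :: x) ω)).mp hj
    · rintro ⟨h0, j, hj⟩
      refine ⟨h0, j, ?_⟩
      rw [hBQ j] at hj
      exact (perc_event_iff n m (fun x => Y (j :: x) ω)).mpr hj
  have hU : MeasurableSet (⋃ j, B j) := MeasurableSet.iUnion hBm0
  have hsplit := measure_inter_add_diff (μ := P) C hU
  have hdiff : C \ (⋃ j, B j) = C ∩ ⋂ j ∈ (Finset.univ : Finset (Fin n)), (B j)ᶜ := by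
    rw [Set.diff_eq, Set.compl_iUnion]
    congr 1
    simp
  have hBc : ∀ j, P ((B j)ᶜ) = 1 - r m := by
    intro j
    rw [prob_compl_eq_one_sub (hBm0 j), hBP j, hrm]
  have hprodval : ∏ j ∈ (Finset.univ : Finset (Fin n)), P ((B j)ᶜ) = (1 - r m) ^ n := by
    rw [Finset.prod_congr rfl fun j _ => hBc j, Finset.prod_const, Finset.card_univ,
      Fintype.card_fin]
  have hq1 : (1 - r m) ^ n ≤ 1 := pow_le_one' tsub_le_self n
  have hXfin : P C * (1 - r m) ^ n ≠ ∞ :=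
    ne_top_of_le_ne_top ENNReal.one_ne_top (mul_le_one' prob_le_one hq1)
  have hmain : P (C ∩ ⋃ j, B j) = P C - P C * (1 - r m) ^ n := by
    refine ENNReal.eq_sub_of_add_eq hXfin ?_
    have h2 : P (C \ ⋃ j, B j) = P C * (1 - r m) ^ n := by
      rw [hdiff, hgroup Finset.univ, hprodval]
    rw [← h2]
    exact hsplit
  rw [hA, hmain, ← hPC, ENNReal.sub_mul (fun _ _ => measure_ne_top P C), one_mul,
    mul_comm (P C)]
end

section
/- Let n ≥ 2, let μ be a probability vector on ℕ₀ with μ₀ ∈ (0,1), and in the Boolean percolation model on the infinite directed n-ary tree 𝒟_n define r_m = P[∃ y ∈ V_μ^c(𝒟_n) with d(∅, y) = m] for m ∈ ℕ. Then r_m → 1 as m → ∞. -/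
open MeasureTheory ProbabilityTheory
open scoped ENNReal

/-- The event that some vertex at relative depth `m` below `v` is uncovered
(all variables indexed relative to the subtree rooted at `v`). -/
def percEvent {Ω : Type*} {n : ℕ} (Y : List (Fin n) → Ω → ℕ)
    (v : List (Fin n)) (m : ℕ) : Set Ω :=
  {ω | ∃ z : List (Fin n), z.length = m ∧
    ∀ x : List (Fin n), x <+: z → ¬ (m - x.length < Y (v ++ x) ω)}

lemma mem_percEvent {Ω : Type*} {n : ℕ} {Y : List (Fin n) → Ω → ℕ}
    {v : List (Fin n)} {m : ℕ} {ω : Ω} :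
    ω ∈ percEvent Y v m ↔ ∃ z : List (Fin n), z.length = m ∧
      ∀ x : List (Fin n), x <+: z → ¬ (m - x.length < Y (v ++ x) ω) := Iff.rfl

lemma percEvent_eq_iUnion {Ω : Type*} {n : ℕ} (Y : List (Fin n) → Ω → ℕ)
    (v : List (Fin n)) (m : ℕ) :
    percEvent Y v m = ⋃ (z : List (Fin n)) (_ : z.length = m),
      ⋂ (x : List (Fin n)) (_ : x <+: z), {ω | ¬ (m - x.length < Y (v ++ x) ω)} := by
  ext ω
  simp [percEvent, Set.mem_iUnion, Set.mem_iInter]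

/-- Measurability of `percEvent` with respect to the σ-algebra generated by the
variables indexed by a set containing the subtree of `v`. -/
lemma percEvent_measurableSet {Ω : Type*} [MeasurableSpace Ω] {n : ℕ}
    (Y : List (Fin n) → Ω → ℕ) (v : List (Fin n)) (m : ℕ)
    (S : Set (List (Fin n))) (hS : ∀ x : List (Fin n), v ++ x ∈ S) :
    MeasurableSet[⨆ w ∈ S, MeasurableSpace.comap (Y w) inferInstance]
      (percEvent Y v m) := by
  rw [percEvent_eq_iUnion]
  refine MeasurableSet.iUnion fun z => MeasurableSet.iUnion fun _ => ?_
  refine MeasurableSet.iInter fun x => MeasurableSet.iInter fun _ => ?_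
  have hb : MeasurableSet[MeasurableSpace.comap (Y (v ++ x)) inferInstance]
      {ω | ¬ (m - x.length < Y (v ++ x) ω)} :=
    ⟨{t | ¬ (m - x.length < t)}, (Set.to_countable _).measurableSet, rfl⟩
  have hle : MeasurableSpace.comap (Y (v ++ x)) inferInstance ≤
      ⨆ w ∈ S, MeasurableSpace.comap (Y w) inferInstance :=
    le_iSup₂ (f := fun w (_ : w ∈ S) => MeasurableSpace.comap (Y w) inferInstance)
      (v ++ x) (hS x)
  exact hle _ hb

lemma percEvent_measurableSet' {Ω : Type*} [MeasurableSpace Ω] {n : ℕ}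
    (Y : List (Fin n) → Ω → ℕ) (hY : ∀ x, Measurable (Y x))
    (v : List (Fin n)) (m : ℕ) :
    MeasurableSet (percEvent Y v m) := by
  rw [percEvent_eq_iUnion]
  refine MeasurableSet.iUnion fun z => MeasurableSet.iUnion fun _ => ?_
  refine MeasurableSet.iInter fun x => MeasurableSet.iInter fun _ => ?_
  exact hY (v ++ x) ((Set.to_countable {t | ¬ (m - x.length < t)}).measurableSet)

open MeasureTheory ProbabilityTheory
open scoped ENNReal

/-- The deterministic lower-bound recursion. -/
noncomputable def percG (μ : ℕ → ℝ) : ℕ → ℝ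
  | 0 => μ 0
  | (m+1) => (∑ k ∈ Finset.range (m+2), μ k) * (percG μ m * (2 - percG μ m))

lemma percG_bounds (μ : ℕ → ℝ) (h0 : 0 < μ 0) (hnn : ∀ m, 0 ≤ μ m)
    (hs : ∀ m, ∑ k ∈ Finset.range m, μ k ≤ 1) :
    ∀ m, 0 < percG μ m ∧ percG μ m ≤ 1 := by
  intro m
  induction m with
  | zero =>
    refine ⟨h0, ?_⟩
    have := hs 1
    simpa [percG] using this
  | succ m ih =>
    obtain ⟨h1, h2⟩ := ih
    have hq0 : μ 0 ≤ ∑ k ∈ Finset.range (m+2), μ k :=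
      Finset.single_le_sum (fun i _ => hnn i) (Finset.mem_range.mpr (Nat.succ_pos _))
    have hq1 : ∑ k ∈ Finset.range (m+2), μ k ≤ 1 := hs (m+2)
    constructor
    · show 0 < (∑ k ∈ Finset.range (m+2), μ k) * (percG μ m * (2 - percG μ m))
      have : 0 < percG μ m * (2 - percG μ m) := mul_pos h1 (by linarith)
      exact mul_pos (by linarith) this
    · show (∑ k ∈ Finset.range (m+2), μ k) * (percG μ m * (2 - percG μ m)) ≤ 1
      nlinarith [sq_nonneg (1 - percG μ m)]

lemma aux_perc_tendsto_one (q G : ℕ → ℝ)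
    (hG1 : ∀ m, G m ≤ 1)
    (hGpos : ∀ m, 0 < G m)
    (hqt : Filter.Tendsto q Filter.atTop (nhds 1))
    (hrec : ∀ m, q (m + 1) * (G m * (2 - G m)) ≤ G (m + 1)) :
    Filter.Tendsto G Filter.atTop (nhds 1) := by
  have key : ∀ δ : ℝ, 0 < δ → δ ≤ 1/4 → ∃ N, ∀ m ≥ N, 1 - 3*δ ≤ G m := by
    intro δ hδ hδ4
    obtain ⟨M₀, hM₀⟩ : ∃ M₀, ∀ m ≥ M₀, 1 - δ < q m :=
      Filter.eventually_atTop.mp (hqt.eventually (eventually_gt_nhds (by linarith)))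
    have hgrow : ∀ m, M₀ ≤ m + 1 → G m ≤ 1 - 2*δ → (1 + δ/2) * G m ≤ G (m+1) := by
      intro m hm hGm
      have hq' := hM₀ (m+1) hm
      have h2 := hGpos m
      have h2' := hG1 m
      have hA : (0:ℝ) < 1 - δ := by linarith
      have hprod : (0:ℝ) ≤ (1 - δ) * (1 - 2*δ - G m) := mul_nonneg hA.le (by linarith)
      have h4 : (0:ℝ) ≤ δ * (1/4 - δ) := mul_nonneg hδ.le (by linarith)
      have hbr : 1 + δ/2 ≤ (1 - δ) * (2 - G m) := by nlinarith
      have hB := mul_le_mul_of_nonneg_right hbr h2.le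
      have hnn : (0:ℝ) ≤ G m * (2 - G m) := mul_nonneg h2.le (by linarith)
      have hC := mul_le_mul_of_nonneg_right hq'.le hnn
      have h1 := hrec m
      nlinarith [hB, hC, h1]
    have hcross : ∃ m₀ ≥ M₀, 1 - 2*δ < G m₀ := by
      by_contra hc
      push_neg at hc
      have hstep : ∀ k : ℕ, (1 + δ/2)^k * G M₀ ≤ G (M₀ + k) := by
        intro k
        induction k with
        | zero => simp
        | succ k ih =>
          have h1 : (1 + δ/2) * ((1 + δ/2)^k * G M₀) ≤ (1 + δ/2) * G (M₀ + k) :=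
            mul_le_mul_of_nonneg_left ih (by linarith)
          have h2 := hgrow (M₀ + k) (by omega) (hc (M₀ + k) (by omega))
          calc (1 + δ/2)^(k+1) * G M₀ = (1 + δ/2) * ((1 + δ/2)^k * G M₀) := by ring
            _ ≤ (1 + δ/2) * G (M₀ + k) := h1
            _ ≤ G (M₀ + k + 1) := h2
      obtain ⟨k, hk⟩ := pow_unbounded_of_one_lt (1 / G M₀) (by linarith : (1:ℝ) < 1 + δ/2)
      have hGM := hGpos M₀
      have h5 : 1 < (1 + δ/2)^k * G M₀ := by
        rw [div_lt_iff₀ hGM] at hk; linarith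
      have h6 := hstep k
      have h7 := hG1 (M₀ + k)
      linarith
    obtain ⟨m₀, hm₀M, hm₀⟩ := hcross
    refine ⟨m₀, ?_⟩
    intro m hm
    induction m, hm using Nat.le_induction with
    | base => linarith
    | succ m hm ih =>
      rcases le_or_gt (G m) (1 - 2*δ) with h | h
      · have := hgrow m (by omega) h
        nlinarith [hGpos m]
      · have h1 := hrec m
        have hq' := hM₀ (m+1) (by omega)
        have e1 : 1 - 2*δ ≤ G m * (2 - G m) := by
          nlinarith [mul_nonneg (hGpos m).le (by linarith [hG1 m] : (0:ℝ) ≤ 1 - G m)]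
        have e2 : (1 - δ) * (1 - 2*δ) ≤ q (m+1) * (G m * (2 - G m)) :=
          mul_le_mul hq'.le e1 (by linarith) (by linarith)
        nlinarith
  rw [Metric.tendsto_atTop]
  intro η hη
  obtain ⟨N, hN⟩ := key (min (η/4) (1/4)) (lt_min (by linarith) (by norm_num)) (min_le_right _ _)
  refine ⟨N, fun m hm => ?_⟩
  have h1 := hN m hm
  have h2 := hG1 m
  have h3 : min (η/4) (1/4) ≤ η/4 := min_le_left _ _
  rw [Real.dist_eq, abs_of_nonpos (by linarith)]
  linarith
/-- For Boolean percolation on the infinite directed `n`-ary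
tree `𝒟ₙ` (`n ≥ 2`), with `r m` the probability that some vertex at distance `m`
from the root is uncovered, one has `r m → 1` as `m → ∞`. -/
theorem boolean_percolation_tree_uncovered_probability_tendsto_one
    (n : ℕ) (hn : 2 ≤ n)
    (μ : ℕ → ℝ) (hμnonneg : ∀ m, 0 ≤ μ m) (hμsum : ∑' m, μ m = 1)
    (hμ0pos : 0 < μ 0) (hμ0lt : μ 0 < 1)
    (Ω : Type*) [MeasurableSpace Ω] (P : Measure Ω) [IsProbabilityMeasure P]
    (Y : List (Fin n) → Ω → ℕ) (hYmeas : ∀ x, Measurable (Y x))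
    (hYindep : iIndepFun Y P)
    (hYdist : ∀ x k, P {ω | Y x ω = k} = ENNReal.ofReal (μ k))
    (r : ℕ → ℝ≥0∞)
    (hr : ∀ m : ℕ, r m = P {ω | ∃ y : List (Fin n), y.length = m ∧
      ¬ ∃ x : List (Fin n), x <+: y ∧ y.length - x.length < Y x ω}) :
    Filter.Tendsto r Filter.atTop (nhds 1) := by
  classical
  have hsummable : Summable μ := by
    by_contra h
    rw [tsum_eq_zero_of_not_summable h] at hμsum
    norm_num at hμsum
  have hqle1 : ∀ m : ℕ, ∑ k ∈ Finset.range m, μ k ≤ 1 := fun m =>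
    (Summable.sum_le_tsum (Finset.range m) (fun i _ => hμnonneg i) hsummable).trans_eq hμsum
  have hq0 : ∀ m : ℕ, μ 0 ≤ ∑ k ∈ Finset.range (m+1), μ k := fun m =>
    Finset.single_le_sum (fun i _ => hμnonneg i) (Finset.mem_range.mpr (Nat.succ_pos _))
  have hGb := percG_bounds μ hμ0pos hμnonneg hqle1
  -- r m = P (percEvent Y (List.nil (α := Fin n)) m)
  have hrA : ∀ m, r m = P (percEvent Y (List.nil (α := Fin n)) m) := by
    intro m
    rw [hr m]
    congr 1
    ext ω
    simp only [percEvent, Set.mem_setOf_eq, List.nil_append]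
    constructor
    · rintro ⟨y, hy, hno⟩
      refine ⟨y, hy, fun x hx hlt => hno ⟨x, hx, ?_⟩⟩
      rw [hy]; exact hlt
    · rintro ⟨z, hz, hall⟩
      refine ⟨z, hz, ?_⟩
      rintro ⟨x, hx, hlt⟩
      exact hall x hx (by rw [hz] at hlt; exact hlt)
  -- distribution of {Y v ≤ m}
  have hYle : ∀ (v : List (Fin n)) (m : ℕ),
      P {ω | Y v ω ≤ m} = ENNReal.ofReal (∑ k ∈ Finset.range (m+1), μ k) := by
    intro v m
    have hset : {ω | Y v ω ≤ m} = ⋃ k ∈ Finset.range (m+1), {ω | Y v ω = k} := by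
      ext ω
      simp [Nat.lt_succ_iff]
    have hdisj : (↑(Finset.range (m+1)) : Set ℕ).PairwiseDisjoint
        (fun k => {ω | Y v ω = k}) := by
      intro a _ b _ hab
      simp only [Function.onFun]
      rw [Set.disjoint_left]
      intro ω h1 h2
      exact hab (h1.symm.trans h2)
    have hmeask : ∀ k ∈ Finset.range (m+1), MeasurableSet {ω | Y v ω = k} :=
      fun k _ => hYmeas v (measurableSet_singleton k)
    calc P {ω | Y v ω ≤ m} = ∑ k ∈ Finset.range (m+1), P {ω | Y v ω = k} := by
          rw [hset]; exact measure_biUnion_finset hdisj hmeask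
      _ = ∑ k ∈ Finset.range (m+1), ENNReal.ofReal (μ k) :=
          Finset.sum_congr rfl fun k _ => hYdist v k
      _ = ENNReal.ofReal (∑ k ∈ Finset.range (m+1), μ k) :=
          (ENNReal.ofReal_sum_of_nonneg fun i _ => hμnonneg i).symm
  -- independence for events over disjoint index sets
  have hIndepST : ∀ (S T : Set (List (Fin n))), Disjoint S T →
      ∀ s t : Set Ω,
      MeasurableSet[⨆ w ∈ S, MeasurableSpace.comap (Y w) inferInstance] s →
      MeasurableSet[⨆ w ∈ T, MeasurableSpace.comap (Y w) inferInstance] t →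
      P (s ∩ t) = P s * P t := by
    intro S T hST s t hs ht
    have h := indep_iSup_of_disjoint (fun w => (hYmeas w).comap_le) hYindep.iIndep hST
    exact (Indep_iff _ _ _).1 h s t hs ht
  -- subtree children
  have h0n : 0 < n := by omega
  have h1n : 1 < n := by omega
  set i0 : Fin n := ⟨0, h0n⟩ with hi0def
  set i1 : Fin n := ⟨1, h1n⟩ with hi1def
  have hi01 : i0 ≠ i1 := by
    simp [hi0def, hi1def, Fin.ext_iff]
  -- key induction
  have hmain : ∀ (m : ℕ) (v : List (Fin n)),
      ENNReal.ofReal (percG μ m) ≤ P (percEvent Y v m) := by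
    intro m
    induction m with
    | zero =>
      intro v
      have hset : percEvent Y v 0 = {ω | Y v ω = 0} := by
        ext ω
        simp only [percEvent, Set.mem_setOf_eq]
        constructor
        · rintro ⟨z, hz, hall⟩
          have hz' : z = [] := List.length_eq_zero_iff.mp hz
          subst hz'
          have := hall [] List.prefix_rfl
          simpa using this
        · intro h0
          refine ⟨[], rfl, ?_⟩
          intro x hx
          have hx' : x = [] := List.prefix_nil.mp hx
          subst hx'
          simp [h0]
      rw [hset, hYdist v 0]
      exact le_of_eq (by rw [show percG μ 0 = μ 0 from rfl])
    | succ m ih =>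
      intro v
      set B0 := percEvent Y (v ++ [i0]) m with hB0def
      set B1 := percEvent Y (v ++ [i1]) m with hB1def
      set C := {ω | Y v ω ≤ m + 1} with hCdef
      -- inclusion
      have hincl : C ∩ (B0 ∪ B1) ⊆ percEvent Y v (m+1) := by
        have key : ∀ (i : Fin n) (ω : Ω), ω ∈ C → ω ∈ percEvent Y (v ++ [i]) m →
            ω ∈ percEvent Y v (m+1) := by
          intro i ω hC hB
          obtain ⟨z, hz, hall⟩ := hB
          refine ⟨i :: z, by simp [hz], ?_⟩
          intro x hx
          cases x with
          | nil =>
            simp only [List.length_nil, List.append_nil, Nat.sub_zero, Nat.not_lt]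
            exact hC
          | cons b x' =>
            rw [List.cons_prefix_cons] at hx
            obtain ⟨rfl, hx'⟩ := hx
            have heq : v ++ b :: x' = (v ++ [b]) ++ x' := by simp
            have hlen : m + 1 - (b :: x').length = m - x'.length := by
              simp [Nat.succ_sub_succ]
            rw [hlen, heq]
            exact hall x' hx'
        rintro ω ⟨hC, hB⟩
        rcases hB with hB | hB
        · exact key i0 ω hC hB
        · exact key i1 ω hC hB
      -- independence 1 : C vs B0 ∪ B1
      have hd1 : Disjoint ({v} : Set (List (Fin n)))
          ({w | v ++ [i0] <+: w} ∪ {w | v ++ [i1] <+: w}) := by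
        rw [Set.disjoint_left]
        rintro a rfl (h | h) <;>
        · have := h.length_le
          simp at this
      have hmC : MeasurableSet[⨆ w ∈ ({v} : Set (List (Fin n))),
          MeasurableSpace.comap (Y w) inferInstance] C := by
        have hb : MeasurableSet[MeasurableSpace.comap (Y v) inferInstance] C :=
          ⟨{t | t ≤ m + 1}, (Set.to_countable _).measurableSet, rfl⟩
        have hle : MeasurableSpace.comap (Y v) inferInstance ≤
            ⨆ w ∈ ({v} : Set (List (Fin n))), MeasurableSpace.comap (Y w) inferInstance :=
          le_iSup₂ (f := fun w (_ : w ∈ ({v} : Set (List (Fin n)))) =>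
            MeasurableSpace.comap (Y w) inferInstance) v rfl
        exact hle _ hb
      have hmB0 : MeasurableSet[⨆ w ∈ ({w | v ++ [i0] <+: w} : Set (List (Fin n))),
          MeasurableSpace.comap (Y w) inferInstance] B0 :=
        percEvent_measurableSet Y (v ++ [i0]) m _ (fun x => List.prefix_append _ x)
      have hmB1 : MeasurableSet[⨆ w ∈ ({w | v ++ [i1] <+: w} : Set (List (Fin n))),
          MeasurableSpace.comap (Y w) inferInstance] B1 :=
        percEvent_measurableSet Y (v ++ [i1]) m _ (fun x => List.prefix_append _ x)
      have hmono : ∀ (S T : Set (List (Fin n))) (s : Set Ω), S ⊆ T →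
          MeasurableSet[⨆ w ∈ S, MeasurableSpace.comap (Y w) inferInstance] s →
          MeasurableSet[⨆ w ∈ T, MeasurableSpace.comap (Y w) inferInstance] s := by
        intro S T s hsub hs
        have hle : (⨆ w ∈ S, MeasurableSpace.comap (Y w) inferInstance) ≤
            ⨆ w ∈ T, MeasurableSpace.comap (Y w) inferInstance :=
          biSup_mono hsub
        exact hle _ hs
      have hindep1 : P (C ∩ (B0 ∪ B1)) = P C * P (B0 ∪ B1) := by
        refine hIndepST _ _ hd1 _ _ hmC ?_
        exact (hmono _ _ _ Set.subset_union_left hmB0).union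
          (hmono _ _ _ Set.subset_union_right hmB1)
      -- independence 2 : B0 vs B1
      have hd2 : Disjoint ({w | v ++ [i0] <+: w} : Set (List (Fin n)))
          {w | v ++ [i1] <+: w} := by
        rw [Set.disjoint_left]
        intro a h0 h1
        have := List.prefix_or_prefix_of_prefix h0 h1
        have hlen : (v ++ [i0]).length = (v ++ [i1]).length := by simp
        rcases this with h | h
        · have := h.eq_of_length hlen
          have : i0 = i1 := by simpa using this
          exact hi01 this
        · have := h.eq_of_length hlen.symm
          have : i1 = i0 := by simpa using this
          exact hi01 this.symm
      have hindep2 : P (B0 ∩ B1) = P B0 * P B1 :=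
        hIndepST _ _ hd2 _ _ hmB0 hmB1
      -- real-number bookkeeping
      have hB0m : MeasurableSet B0 := percEvent_measurableSet' Y hYmeas _ _
      have hB1m : MeasurableSet B1 := percEvent_measurableSet' Y hYmeas _ _
      set a := (P B0).toReal with hadef
      set b := (P B1).toReal with hbdef
      have hfin : ∀ s : Set Ω, P s ≠ ∞ := fun s => measure_ne_top P s
      have ha1 : a ≤ 1 := by
        rw [hadef]
        exact ENNReal.toReal_le_of_le_ofReal zero_le_one (by simpa using prob_le_one)
      have hb1 : b ≤ 1 := by
        rw [hbdef]
        exact ENNReal.toReal_le_of_le_ofReal zero_le_one (by simpa using prob_le_one)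
      have haG : percG μ m ≤ a :=
        (ENNReal.ofReal_le_iff_le_toReal (hfin B0)).mp (ih (v ++ [i0]))
      have hbG : percG μ m ≤ b :=
        (ENNReal.ofReal_le_iff_le_toReal (hfin B1)).mp (ih (v ++ [i1]))
      obtain ⟨hGpos, hGle1⟩ := hGb m
      -- P (B0 ∪ B1) in real terms
      have hunion : (P (B0 ∪ B1)).toReal = a + b - a * b := by
        have h := measure_union_add_inter (μ := P) B0 hB1m
        rw [hindep2] at h
        have h' := congrArg ENNReal.toReal h
        rw [ENNReal.toReal_add (hfin _) (ENNReal.mul_ne_top (hfin _) (hfin _)),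
          ENNReal.toReal_add (hfin _) (hfin _), ENNReal.toReal_mul] at h'
        rw [hadef, hbdef]
        linarith
      have hkey : percG μ m * (2 - percG μ m) ≤ a + b - a * b := by
        nlinarith [mul_le_mul (by linarith : 1 - a ≤ 1 - percG μ m)
          (by linarith : 1 - b ≤ 1 - percG μ m) (by linarith) (by linarith)]
      have hUlb : ENNReal.ofReal (percG μ m * (2 - percG μ m)) ≤ P (B0 ∪ B1) := by
        rw [ENNReal.ofReal_le_iff_le_toReal (hfin _), hunion]
        exact hkey
      calc ENNReal.ofReal (percG μ (m+1))
          = ENNReal.ofReal ((∑ k ∈ Finset.range (m+2), μ k) *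
              (percG μ m * (2 - percG μ m))) := by
            rw [show percG μ (m+1) = (∑ k ∈ Finset.range (m+2), μ k) *
              (percG μ m * (2 - percG μ m)) from rfl]
        _ = ENNReal.ofReal (∑ k ∈ Finset.range (m+2), μ k) *
              ENNReal.ofReal (percG μ m * (2 - percG μ m)) :=
            ENNReal.ofReal_mul (Finset.sum_nonneg fun i _ => hμnonneg i)
        _ ≤ P C * P (B0 ∪ B1) := by
            refine mul_le_mul' (le_of_eq ?_) hUlb
            rw [hCdef, hYle v (m+1)]
        _ = P (C ∩ (B0 ∪ B1)) := hindep1.symm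
        _ ≤ P (percEvent Y v (m+1)) := measure_mono hincl
  -- deterministic convergence
  have hqt : Filter.Tendsto (fun m => ∑ k ∈ Finset.range (m+1+1), μ k)
      Filter.atTop (nhds 1) := by
    have h := hsummable.hasSum.tendsto_sum_nat
    rw [hμsum] at h
    exact h.comp (Filter.tendsto_add_atTop_nat 2)
  have hGt : Filter.Tendsto (percG μ) Filter.atTop (nhds 1) := by
    refine aux_perc_tendsto_one (fun m => ∑ k ∈ Finset.range (m+1), μ k) (percG μ)
      (fun m => (hGb m).2) (fun m => (hGb m).1) ?_ (fun m => le_of_eq rfl)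
    have h := hsummable.hasSum.tendsto_sum_nat
    rw [hμsum] at h
    exact h.comp (Filter.tendsto_add_atTop_nat 1)
  -- conclude
  have hrle : ∀ m, r m ≤ 1 := by
    intro m
    rw [hrA m]
    exact prob_le_one
  have hGler : ∀ m, ENNReal.ofReal (percG μ m) ≤ r m := by
    intro m
    rw [hrA m]
    exact hmain m (List.nil (α := Fin n))
  have h1 : Filter.Tendsto (fun m => ENNReal.ofReal (percG μ m))
      Filter.atTop (nhds 1) := by
    have := (ENNReal.continuous_ofReal.tendsto 1).comp hGt
    rw [ENNReal.ofReal_one] at this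
    exact this
  have h2 : Filter.Tendsto (fun _ : ℕ => (1 : ℝ≥0∞)) Filter.atTop (nhds 1) :=
    tendsto_const_nhds
  exact tendsto_of_tendsto_of_tendsto_of_le_of_le h1 h2 hGler hrle
end

section
/- Let μ be a probability vector on ℕ₀ with μ₀ ∈ (0,1), and suppose there exist c ∈ (0,∞) and n₀ ∈ ℕ such that ∑_{k>n} μ_k = c/n for all n ≥ n₀. Then the series ∑_{m≥0} ∏_{k=1}^{m} ∑_{l=0}^{k−1} μ_l converges if and only if c > 1. -/
open Finset Real

/-- Ratio comparison: if `a (m+1) / a m ≤ b (m+1) / b m` for `m ≥ N`, then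
`a m * b N ≤ a N * b m` for `m ≥ N`. -/
private lemma ratio_compare (a b : ℕ → ℝ) (N : ℕ)
    (ha : ∀ m, N ≤ m → 0 ≤ a m) (hb : ∀ m, N ≤ m → 0 < b m)
    (h : ∀ m, N ≤ m → a (m + 1) * b m ≤ a m * b (m + 1)) :
    ∀ m, N ≤ m → a m * b N ≤ a N * b m := by
  intro m hm
  induction m, hm using Nat.le_induction with
  | base => exact le_rfl
  | succ m hm ih =>
    have hbm := hb m hm
    have hbm1 := hb (m + 1) (by omega)
    have hbN := hb N le_rfl
    have h1 := mul_le_mul_of_nonneg_right (h m hm) hbN.le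
    have h2 := mul_le_mul_of_nonneg_right ih hbm1.le
    have key : a (m + 1) * b N * b m ≤ a N * b (m + 1) * b m := by nlinarith
    exact le_of_mul_le_mul_right key hbm

/-- If `μ` is a probability vector on `ℕ₀` with `μ 0 ∈ (0,1)`
whose tails satisfy `∑_{k > n} μ k = c / n` for all `n ≥ n₀` (for some
`c ∈ (0,∞)` and `n₀ ∈ ℕ`), then the series
`∑_{m ≥ 0} ∏_{k=1}^{m} ∑_{l=0}^{k-1} μ l` converges iff `c > 1`. -/
theorem kesten_series_summable_iff_tail_constant_gt_one
    (μ : ℕ → ℝ) (hμnonneg : ∀ n, 0 ≤ μ n) (hμsum : ∑' n, μ n = 1)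
    (hμ0pos : 0 < μ 0) (hμ0lt : μ 0 < 1)
    (c : ℝ) (hc : 0 < c) (n₀ : ℕ) (hn₀ : 1 ≤ n₀)
    (htail : ∀ n : ℕ, n₀ ≤ n → (∑' k : ℕ, if n < k then μ k else 0) = c / n) :
    Summable (fun m : ℕ => ∏ k ∈ Finset.Icc 1 m, ∑ l ∈ Finset.range k, μ l) ↔
      1 < c := by
  have hsummμ : Summable μ := by
    by_contra h
    rw [tsum_eq_zero_of_not_summable h] at hμsum
    norm_num at hμsum
  set S : ℕ → ℝ := fun k => ∑ l ∈ Finset.range k, μ l with hSdef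
  set a : ℕ → ℝ := fun m => ∏ k ∈ Finset.Icc 1 m, S k with hadef
  have hSge : ∀ k, 1 ≤ k → μ 0 ≤ S k := fun k hk =>
    Finset.single_le_sum (fun i _ => hμnonneg i) (Finset.mem_range.2 hk)
  have hSkey : ∀ n : ℕ, n₀ ≤ n → S (n + 1) = 1 - c / n := by
    intro n hn
    have htail' : (∑' k : ℕ, if n < k then μ k else 0) = ∑' i : ℕ, μ (i + (n + 1)) := by
      refine ((Function.Injective.tsum_eq (g := fun i : ℕ => i + (n + 1))
        (add_left_injective (n + 1)) ?_).symm).trans ?_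
      · intro x hx
        simp only [Function.mem_support, ne_eq, ite_eq_right_iff, not_forall] at hx
        obtain ⟨hnx, -⟩ := hx
        exact ⟨x - (n + 1), show x - (n + 1) + (n + 1) = x by omega⟩
      · exact tsum_congr fun i => if_pos (by omega)
    have hsplit := hsummμ.sum_add_tsum_nat_add (n + 1)
    rw [hμsum] at hsplit
    have ht := htail n hn
    rw [htail'] at ht
    have : S (n + 1) + c / n = 1 := by rw [← ht]; exact hsplit
    linarith
  have hapos : ∀ m, 0 < a m := by
    intro m
    exact Finset.prod_pos fun k hk =>
      lt_of_lt_of_le hμ0pos (hSge k (Finset.mem_Icc.1 hk).1)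
  have hastep : ∀ m, a (m + 1) = a m * S (m + 1) := fun m =>
    Finset.prod_Icc_succ_top (by omega) S
  have haS : ∀ m : ℕ, n₀ ≤ m → a (m + 1) = a m * (1 - c / m) := by
    intro m hm; rw [hastep m, hSkey m hm]
  constructor
  · -- Summable → 1 < c, by contradiction
    intro hsum
    by_contra hc1
    push_neg at hc1
    set N := max n₀ 2 with hN
    set b : ℕ → ℝ := fun m => ((m : ℝ) - 1)⁻¹ with hbdef
    have hbpos : ∀ m, N ≤ m → 0 < b m := by
      intro m hm
      have h2 : (2 : ℕ) ≤ m := le_trans (le_max_right _ _) hm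
      have : (2 : ℝ) ≤ (m : ℝ) := by exact_mod_cast h2
      exact inv_pos.2 (by linarith)
    have hratio : ∀ m, N ≤ m → b (m + 1) * a m ≤ b m * a (m + 1) := by
      intro m hm
      have hm0 : n₀ ≤ m := le_trans (le_max_left _ _) hm
      have hm2 : (2 : ℕ) ≤ m := le_trans (le_max_right _ _) hm
      have hmR : (2 : ℝ) ≤ (m : ℝ) := by exact_mod_cast hm2
      rw [haS m hm0]
      have hb1 : b (m + 1) = (m : ℝ)⁻¹ := by simp [hbdef]
      rw [hb1, hbdef]
      have hminv : 0 < (m : ℝ)⁻¹ := by positivity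
      have hm1inv : 0 < ((m : ℝ) - 1)⁻¹ := inv_pos.2 (by linarith)
      have h1 : (m : ℝ)⁻¹ ≤ ((m : ℝ) - 1)⁻¹ * (1 - c / m) := by
        rw [div_eq_mul_inv]
        have hid : ((m : ℝ) - 1)⁻¹ * (1 - (m : ℝ)⁻¹) = (m : ℝ)⁻¹ := by
          field_simp
          exact div_self (ne_of_gt (by linarith))
        linarith [mul_nonneg (mul_nonneg hm1inv.le
          (by linarith : (0:ℝ) ≤ 1 - c)) hminv.le]
      calc (m : ℝ)⁻¹ * a m ≤ (((m : ℝ) - 1)⁻¹ * (1 - c / m)) * a m :=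
            mul_le_mul_of_nonneg_right h1 (hapos m).le
        _ = ((m : ℝ) - 1)⁻¹ * (a m * (1 - c / m)) := by ring
    have hcomp := ratio_compare b a N (fun m hm => (hbpos m hm).le)
      (fun m _ => (hapos m)) hratio
    have hK : 0 < a N / b N := div_pos (hapos N) (hbpos N le_rfl)
    have hsum' : Summable fun m => a (m + N) := (summable_nat_add_iff N).2 hsum
    have hble : ∀ m : ℕ, (a N / b N) * b (m + N) ≤ a (m + N) := by
      intro m
      have h := hcomp (m + N) (by omega)
      rw [div_mul_eq_mul_div, div_le_iff₀ (hbpos N le_rfl)]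
      linarith
    have hsumb : Summable fun m => (a N / b N) * b (m + N) :=
      Summable.of_nonneg_of_le
        (fun m => mul_nonneg hK.le (hbpos (m + N) (by omega)).le)
        (fun m => hble m) hsum'
    have hsumb' : Summable fun m => b (m + N) := by
      have h := hsumb.mul_left (a N / b N)⁻¹
      exact h.congr fun m => inv_mul_cancel_left₀ hK.ne' _
    have hNge : 2 ≤ N := le_max_right _ _
    have hb'' : ∀ m : ℕ, b (m + N) = ((↑(m + (N - 1)) : ℝ))⁻¹ := by
      intro m
      have hcast : ((m + N : ℕ) : ℝ) - 1 = ((m + (N - 1) : ℕ) : ℝ) := by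
        push_cast [Nat.cast_sub (by omega : 1 ≤ N)]
        ring
      simp only [hbdef, hcast]
    rw [funext hb''] at hsumb'
    exact Real.not_summable_natCast_inv ((summable_nat_add_iff (N - 1)).1 hsumb')
  · -- 1 < c → Summable
    intro hc1
    set b : ℕ → ℝ := fun m => (m : ℝ) ^ (-c) with hbdef
    have hbpos : ∀ m : ℕ, n₀ ≤ m → 0 < b m := by
      intro m hm
      have : (0 : ℝ) < m := by exact_mod_cast lt_of_lt_of_le hn₀ hm
      exact Real.rpow_pos_of_pos this _
    have hratio : ∀ m, n₀ ≤ m → a (m + 1) * b m ≤ a m * b (m + 1) := by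
      intro m hm
      rw [haS m hm]
      have hmpos : (0 : ℝ) < m := by exact_mod_cast lt_of_lt_of_le hn₀ hm
      set A : ℝ := (m : ℝ) ^ c with hA
      set B : ℝ := ((m : ℝ) + 1) ^ c with hB
      have hApos : 0 < A := Real.rpow_pos_of_pos hmpos _
      have hBpos : 0 < B := Real.rpow_pos_of_pos (by linarith) _
      have h1 : (1 : ℝ) - c / m ≤ Real.exp (-(c / m)) := by
        linarith [Real.add_one_le_exp (-(c / m))]
      have hexp : (Real.exp ((m : ℝ)⁻¹)) ^ c = Real.exp (c / m) := by
        rw [Real.rpow_def_of_pos (Real.exp_pos _), Real.log_exp, div_eq_mul_inv]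
        ring_nf
      have h2 : B ≤ A * Real.exp (c / m) := by
        have hle : (m : ℝ) + 1 ≤ (m : ℝ) * Real.exp ((m : ℝ)⁻¹) := by
          have he := Real.add_one_le_exp ((m : ℝ)⁻¹)
          have := mul_le_mul_of_nonneg_left he hmpos.le
          rw [mul_add, mul_one, mul_inv_cancel₀ hmpos.ne'] at this
          linarith
        calc B ≤ ((m : ℝ) * Real.exp ((m : ℝ)⁻¹)) ^ c :=
              Real.rpow_le_rpow (by positivity) hle hc.le
          _ = A * (Real.exp ((m : ℝ)⁻¹)) ^ c :=
              Real.mul_rpow hmpos.le (Real.exp_pos _).le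
          _ = A * Real.exp (c / m) := by rw [hexp]
      have hAB : (1 - c / m) * B ≤ A := by
        calc (1 - c / m) * B ≤ Real.exp (-(c / m)) * B :=
              mul_le_mul_of_nonneg_right h1 hBpos.le
          _ ≤ Real.exp (-(c / m)) * (A * Real.exp (c / m)) :=
              mul_le_mul_of_nonneg_left h2 (Real.exp_pos _).le
          _ = A * (Real.exp (-(c / m)) * Real.exp (c / m)) := by ring
          _ = A := by rw [← Real.exp_add]; simp
      have key : (1 - c / m) * b m ≤ b (m + 1) := by
        have hbm : b m = A⁻¹ := by
          show (m : ℝ) ^ (-c) = A⁻¹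
          rw [Real.rpow_neg hmpos.le]
        have hbm1 : b (m + 1) = B⁻¹ := by
          show ((m + 1 : ℕ) : ℝ) ^ (-c) = B⁻¹
          push_cast
          rw [Real.rpow_neg (by linarith)]
        rw [hbm, hbm1]
        have h3 : (1 - c / (m : ℝ)) / A ≤ 1 / B :=
          (div_le_div_iff₀ hApos hBpos).2 (by linarith)
        simpa [div_eq_mul_inv, one_div] using h3
      calc a m * (1 - c / m) * b m = a m * ((1 - c / m) * b m) := by ring
        _ ≤ a m * b (m + 1) := mul_le_mul_of_nonneg_left key (hapos m).le
    have hcomp := ratio_compare a b n₀ (fun m _ => (hapos m).le) hbpos hratio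
    have hsumB : Summable b := Real.summable_nat_rpow.2 (by linarith)
    have hK : 0 < a n₀ / b n₀ := div_pos (hapos n₀) (hbpos n₀ le_rfl)
    have hle : ∀ m : ℕ, a (m + n₀) ≤ (a n₀ / b n₀) * b (m + n₀) := by
      intro m
      have h := hcomp (m + n₀) (by omega)
      rw [div_mul_eq_mul_div, le_div_iff₀ (hbpos n₀ le_rfl)]
      linarith
    have : Summable fun m => a (m + n₀) :=
      Summable.of_nonneg_of_le (fun m => (hapos _).le) hle
        (((summable_nat_add_iff n₀).2 hsumB).mul_left _)
    exact (summable_nat_add_iff n₀).1 this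
end

section
/- Let n ∈ ℕ and p ∈ (0,1), and let M_{n,p} be the n×n real matrix whose last column has all entries equal to p, whose subdiagonal entries (row i+1, column i, for i = 1,…,n−1) equal 1 − p, and all of whose other entries are 0. Then the characteristic polynomial χ_{n,p}(z) = det(z·I_n − M_{n,p}) satisfies (z − 1 + p)·χ_{n,p}(z) = p(1−p)ⁿ + (z − 1)zⁿ as polynomials in z. -/
open Polynomial Matrix Finset

noncomputable def Amat (p : ℝ) (n : ℕ) : Matrix (Fin n) (Fin n) ℝ[X] :=
  Matrix.of fun i j =>
    if (j : ℕ) = n - 1 then (if (i : ℕ) = (j : ℕ) then X - C p else -C p)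
    else if (i : ℕ) = (j : ℕ) + 1 then -C (1 - p)
    else if (i : ℕ) = (j : ℕ) then X else 0

lemma det_minor_last (p : ℝ) (n : ℕ) :
    ((Amat p (n+1)).submatrix Fin.succ ((Fin.last n).succAbove)).det = (-C (1 - p))^n := by
  have h : ((Amat p (n+1)).submatrix Fin.succ ((Fin.last n).succAbove)).BlockTriangular id := by
    intro i j hji
    simp only [id] at hji
    have hj := j.isLt
    simp only [Matrix.submatrix_apply, Fin.succAbove_last, Amat, Matrix.of_apply,
      Fin.val_succ, Fin.coe_castSucc, Nat.add_sub_cancel]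
    have : ¬ ((j:ℕ) = n) := by omega
    have h2 : ¬ ((i:ℕ)+1 = (j:ℕ)+1) := by omega
    have h3 : ¬ ((i:ℕ)+1 = (j:ℕ)) := by
      have : (j:ℕ) < (i:ℕ) := hji
      omega
    simp [this, h2, h3, show ¬ ((i:ℕ) = (j:ℕ)) from by have : (j:ℕ) < (i:ℕ) := hji; omega]
  rw [Matrix.det_of_upperTriangular h]
  have hd : ∀ i : Fin n, ((Amat p (n+1)).submatrix Fin.succ ((Fin.last n).succAbove)) i i
      = -C (1 - p) := by
    intro i
    have hi := i.isLt
    simp only [Matrix.submatrix_apply, Fin.succAbove_last, Amat, Matrix.of_apply,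
      Fin.val_succ, Fin.coe_castSucc, Nat.add_sub_cancel]
    have : ¬ ((i:ℕ) = n) := by omega
    simp [this]
  rw [Finset.prod_congr rfl (fun i _ => hd i)]
  simp

lemma Amat_submatrix_zero (p : ℝ) (n : ℕ) :
    (Amat p (n+1)).submatrix Fin.succ ((0 : Fin (n+1)).succAbove) = Amat p n := by
  ext i j
  have hj := j.isLt
  simp only [Matrix.submatrix_apply, Fin.succAbove_zero, Amat, Matrix.of_apply,
    Fin.val_succ, Nat.add_sub_cancel]
  have e1 : ((j:ℕ)+1 = n) = ((j:ℕ) = n-1) := propext (by omega)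
  have e2 : ((i:ℕ)+1 = (j:ℕ)+1) = ((i:ℕ) = (j:ℕ)) := propext (by omega)
  have e3 : ((i:ℕ)+1 = (j:ℕ)+1+1) = ((i:ℕ) = (j:ℕ)+1) := propext (by omega)
  simp only [e1, e2, e3]

lemma Amat_rec (p : ℝ) (n : ℕ) (hn : 1 ≤ n) :
    (Amat p (n+1)).det = X * (Amat p n).det - C p * (C (1 - p))^n := by
  rw [Matrix.det_succ_row_zero]
  have hvan : ∀ j : Fin (n+1), j ∉ ({0, Fin.last n} : Finset (Fin (n+1))) →
      (-1 : ℝ[X])^(j:ℕ) * Amat p (n+1) 0 j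
        * ((Amat p (n+1)).submatrix Fin.succ j.succAbove).det = 0 := by
    intro j hj
    simp only [Finset.mem_insert, Finset.mem_singleton] at hj
    push_neg at hj
    have h1 : ¬ ((j:ℕ) = n) := by
      intro h
      exact hj.2 (by ext; simpa using h)
    have h0 : ¬ ((0:ℕ) = (j:ℕ) + 1) := by omega
    have h0' : ¬ ((0:ℕ) = (j:ℕ)) := by
      intro h
      exact hj.1 (by ext; simp [h.symm])
    have : Amat p (n+1) 0 j = 0 := by
      simp [Amat, h1, h0, h0']
    rw [this]; ring
  have hne : (0 : Fin (n+1)) ≠ Fin.last n := by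
    intro h
    have := congrArg Fin.val h
    simp [Fin.val_last] at this
    omega
  rw [← Finset.sum_subset (Finset.subset_univ {0, Fin.last n}) (fun x _ hx => hvan x hx),
    Finset.sum_pair hne]
  have hA0 : Amat p (n+1) 0 0 = X := by
    have h : ¬ ((0:ℕ) = n) := by omega
    simp [Amat, h]
  have hAl : Amat p (n+1) 0 (Fin.last n) = -C p := by
    have h : ¬ ((0:ℕ) = n) := by omega
    simp [Amat, Fin.val_last, h]
  rw [hA0, hAl, Amat_submatrix_zero, det_minor_last]
  simp only [Fin.val_zero, pow_zero, one_mul, Fin.val_last, neg_pow (C (1-p)) n]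
  ring_nf
  rw [pow_mul']
  norm_num

lemma Amat_one (p : ℝ) : (Amat p 1).det = X - C p := by
  simp [Matrix.det_fin_one, Amat]

lemma Amat_key (p : ℝ) (m : ℕ) :
    (X - C (1 - p)) * (Amat p (m+1)).det =
      C (p * (1 - p) ^ (m+1)) + (X - 1) * X ^ (m+1) := by
  induction m with
  | zero =>
    rw [Amat_one]
    simp only [_root_.map_mul, _root_.map_sub, _root_.map_one, _root_.map_pow,
      Polynomial.C_1, pow_one]
    ring
  | succ k ih =>
    rw [Amat_rec p (k+1) (by omega)]
    have expand : (X - C (1 - p)) * (X * (Amat p (k+1)).det - C p * (C (1 - p))^(k+1))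
        = X * ((X - C (1 - p)) * (Amat p (k+1)).det)
          - (X - C (1 - p)) * (C p * (C (1 - p))^(k+1)) := by ring
    rw [expand, ih]
    simp only [_root_.map_mul, _root_.map_sub, _root_.map_one, _root_.map_pow,
      Polynomial.C_1]
    ring

/-- Let `M = M_{n,p}` be the `n × n` matrix whose last column
has all entries `p`, whose subdiagonal entries equal `1 - p`, and whose other
entries vanish. Then its characteristic polynomial `χ(z) = det (z·I - M)`
satisfies `(z - 1 + p) · χ(z) = p (1-p)ⁿ + (z - 1) zⁿ`. -/
theorem charpoly_tree_mean_matrix (n : ℕ) (hn : 1 ≤ n) (p : ℝ)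
    (hp0 : 0 < p) (hp1 : p < 1) :
    (X - C (1 - p)) *
      (Matrix.of fun i j : Fin n =>
        if (j : ℕ) = n - 1 then p
        else if (i : ℕ) = (j : ℕ) + 1 then 1 - p else (0 : ℝ)).charpoly =
      C (p * (1 - p) ^ n) + (X - 1) * X ^ n := by
  have hA : (Matrix.of fun i j : Fin n =>
      if (j : ℕ) = n - 1 then p
      else if (i : ℕ) = (j : ℕ) + 1 then 1 - p else (0 : ℝ)).charpoly
      = (Amat p n).det := by
    unfold Matrix.charpoly
    congr 1
    ext i j
    by_cases h : i = j
    · subst h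
      rw [Matrix.charmatrix_apply_eq]
      simp only [Matrix.of_apply, Amat]
      by_cases h1 : (i : ℕ) = n - 1 <;> simp [h1]
    · rw [Matrix.charmatrix_apply_ne _ _ _ h]
      have h' : ¬ ((i:ℕ) = (j:ℕ)) := fun hc => h (Fin.ext hc)
      simp only [Matrix.of_apply, Amat]
      by_cases h1 : (j : ℕ) = n - 1
      · have h'' : ¬ ((i:ℕ) = n - 1) := by omega
        simp [h1, h', h'']
      · by_cases h2 : (i:ℕ) = (j:ℕ)+1 <;> simp [h1, h2, h']
  rw [hA]
  obtain ⟨m, rfl⟩ : ∃ m, n = m + 1 := ⟨n - 1, by omega⟩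
  exact Amat_key p m
end
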